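/- Suppose n ≥ 2 and r ≥ 2, and fix m ∈ {1, …, n}. Let T_m = ∑_{l=1}^r S_l ρ_m(l). Then E[T_m⁴] ≤ (7/48 + r²/(36n²) + 1/(5n))·r⁶. -/

import Mathlib

open MeasureTheory Finset Real

noncomputable section

instance instMSPerm (r : ℕ) : MeasurableSpace (Equiv.Perm (Fin r)) := ⊤

/-- The joint law of `n` independent uniformly random permutations of `{1, …, r}`:
the uniform probability measure on the finite product space. -/
def friedmanMeasure (n r : ℕ) : Measure (Fin n → Equiv.Perm (Fin r)) :=
  (PMF.uniformOfFintype (Fin n → Equiv.Perm (Fin r))).toMeasure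

/-- `ρ_i(j) = π_i(j) - (r+1)/2`, where `π_i(j) ∈ {1, …, r}` is the rank assigned by the
`i`-th permutation to treatment `j` (a permutation of `Fin r` assigns values in `{0, …, r-1}`,
hence the `+ 1`). -/
def rho (n r : ℕ) (i : Fin n) (j : Fin r) (ω : Fin n → Equiv.Perm (Fin r)) : ℝ :=
  ((ω i j : ℕ) : ℝ) + 1 - ((r : ℝ) + 1) / 2

/-- `S_j = (√12/√(r(r+1)n)) ∑_{i=1}^n ρ_i(j)`. -/
def Sstat (n r : ℕ) (j : Fin r) (ω : Fin n → Equiv.Perm (Fin r)) : ℝ :=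
  Real.sqrt 12 / Real.sqrt ((r : ℝ) * ((r : ℝ) + 1) * (n : ℝ)) * ∑ i, rho n r i j ω

/-- Friedman's statistic `F_r = ∑_{j=1}^r S_j²`. -/
def friedman (n r : ℕ) (ω : Fin n → Equiv.Perm (Fin r)) : ℝ :=
  ∑ j, (Sstat n r j ω) ^ 2

/-- The chi-square distribution with `p` degrees of freedom: the Gamma distribution
with shape `p/2` and rate `1/2`. -/
def chiSq (p : ℕ) : Measure ℝ := ProbabilityTheory.gammaMeasure ((p : ℝ) / 2) (1 / 2)

end

/-!
Substituting `π_i ↦ π_i π_m` for `i ≠ m`, a bijection of the sample space, turns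
`T_m` into `c (V + ∑_{i ≠ m} Y(π_i))` with `c = √12 / √(r(r+1)n)`, `V = ∑_k ρ(k)² = r(r²-1)/12`
and `Y(τ) = ∑_l ρ(τ l) ρ(l)` the (unnormalised) Spearman correlation of a uniform permutation
with the identity. The `Y(π_i)` are i.i.d. and centred, `|Y| ≤ V` by Cauchy–Schwarz, and
`E[Y²] = V²/(r-1)` by Hoeffding's variance formula for random permutations. Expanding the
fourth power of a sum of i.i.d. centred terms gives
`E[(V + Z)⁴] ≤ V⁴ + 11(n-1)V² E[Y²] + 3(n-1)(n-2) E[Y²]²`, and the bound is then arithmetic.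
-/

open Function Equiv
open scoped BigOperators

section IndependentCoordinates

variable {ι G : Type*} [Fintype ι] [DecidableEq ι] [Fintype G]

lemma expect_mul_of_update_invariant (a : ι) (f : G → ℝ) {g : (ι → G) → ℝ}
    (hg : ∀ ω x, g (update ω a x) = g ω) :
    𝔼 ω, f (ω a) * g ω = (𝔼 x, f x) * 𝔼 ω, g ω := by
  set e := Equiv.funSplitAt a G
  have expect_split : ∀ F : (ι → G) → ℝ, 𝔼 ω, F ω = 𝔼 x, 𝔼 ψ, F (e.symm (x, ψ)) := fun F => by
    rw [← Fintype.expect_equiv e.symm _ F (fun _ => rfl), ← univ_product_univ,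
      expect_product' univ univ fun x ψ => F (e.symm (x, ψ))]
  have hgx : ∀ x y ψ, g (e.symm (y, ψ)) = g (e.symm (x, ψ)) := fun x y ψ => by
    rw [← hg (e.symm (x, ψ)) y]
    congr 1
    ext j
    by_cases h : j = a
    · subst h; simp [e]
    · simp [e, h]
  rw [expect_split, expect_split g, expect_mul_expect]
  refine expect_congr rfl fun x _ => ?_
  have : Nonempty G := ⟨x⟩
  simp only [hgx x, Fintype.expect_const]
  simp [e, mul_expect]

lemma expect_pow_sum_insert (Y : G → ℝ) {a : ι} {s : Finset ι} (ha : a ∉ s) (k : ℕ) :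
    𝔼 ω : ι → G, (∑ i ∈ insert a s, Y (ω i)) ^ k
      = ∑ j ∈ range (k + 1),
          (𝔼 x, Y x ^ j) * (𝔼 ω : ι → G, (∑ i ∈ s, Y (ω i)) ^ (k - j)) * k.choose j := by
  simp_rw [sum_insert ha, add_pow]
  rw [expect_sum_comm]
  refine sum_congr rfl fun j _ => ?_
  rw [← expect_mul, expect_mul_of_update_invariant a (Y · ^ j) fun ω x => ?_]
  refine congrArg (· ^ (k - j)) (sum_congr rfl fun i hi => ?_)
  rw [update_of_ne (ne_of_mem_of_not_mem hi ha)]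

variable [Nonempty G]

theorem expect_pow_sum_of_expect_eq_zero (Y : G → ℝ) (hY : 𝔼 x, Y x = 0) (s : Finset ι) :
    𝔼 ω : ι → G, ∑ i ∈ s, Y (ω i) = 0 ∧
    𝔼 ω : ι → G, (∑ i ∈ s, Y (ω i)) ^ 2 = #s * 𝔼 x, Y x ^ 2 ∧
    𝔼 ω : ι → G, (∑ i ∈ s, Y (ω i)) ^ 3 = #s * 𝔼 x, Y x ^ 3 ∧
    𝔼 ω : ι → G, (∑ i ∈ s, Y (ω i)) ^ 4
      = #s * 𝔼 x, Y x ^ 4 + 3 * #s * (#s - 1) * (𝔼 x, Y x ^ 2) ^ 2 := by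
  induction s using Finset.induction_on with
  | empty => simp
  | insert a s ha ih =>
    obtain ⟨h1, h2, h3, h4⟩ := ih
    have step := expect_pow_sum_insert Y ha
    have step1 := step 1
    simp only [pow_one] at step1
    simp [step, step1, sum_range_succ, card_insert_of_notMem ha, h1, h2, h3, h4, hY, Nat.choose]
    refine ⟨by ring, by ring, by ring⟩

theorem expect_add_sum_pow_four_le (Y : G → ℝ) {a : ℝ} (hY : 𝔼 x, Y x = 0)
    (hYa : ∀ x, |Y x| ≤ a) (s : Finset ι) :
    𝔼 ω : ι → G, (a + ∑ i ∈ s, Y (ω i)) ^ 4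
      ≤ a ^ 4 + 11 * #s * a ^ 2 * 𝔼 x, Y x ^ 2 + 3 * #s * (#s - 1) * (𝔼 x, Y x ^ 2) ^ 2 := by
  obtain ⟨h1, h2, h3, h4⟩ := expect_pow_sum_of_expect_eq_zero Y hY s
  have ha : 0 ≤ a := (abs_nonneg _).trans (hYa (Classical.arbitrary G))
  have hY2 : ∀ x, Y x ^ 2 ≤ a ^ 2 := fun x => sq_le_sq' (abs_le.1 (hYa x)).1 (abs_le.1 (hYa x)).2
  have hM3 : 𝔼 x, Y x ^ 3 ≤ a * 𝔼 x, Y x ^ 2 := by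
    rw [mul_expect]
    refine expect_le_expect fun x _ => ?_
    nlinarith [mul_le_mul_of_nonneg_right (le_abs_self (Y x)) (sq_nonneg (Y x)), hYa x]
  have hM4 : 𝔼 x, Y x ^ 4 ≤ a ^ 2 * 𝔼 x, Y x ^ 2 := by
    rw [mul_expect]
    refine expect_le_expect fun x _ => ?_
    nlinarith [mul_le_mul_of_nonneg_right (hY2 x) (sq_nonneg (Y x))]
  have expand : 𝔼 ω : ι → G, (a + ∑ i ∈ s, Y (ω i)) ^ 4
      = a ^ 4 + 4 * a ^ 3 * 𝔼 ω : ι → G, ∑ i ∈ s, Y (ω i)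
        + 6 * a ^ 2 * 𝔼 ω : ι → G, (∑ i ∈ s, Y (ω i)) ^ 2
        + 4 * a * 𝔼 ω : ι → G, (∑ i ∈ s, Y (ω i)) ^ 3
        + 𝔼 ω : ι → G, (∑ i ∈ s, Y (ω i)) ^ 4 := by
    rw [mul_expect, mul_expect, mul_expect, ← Fintype.expect_const (ι := ι → G) (a ^ 4),
      ← expect_add_distrib, ← expect_add_distrib, ← expect_add_distrib, ← expect_add_distrib]
    exact expect_congr rfl fun ω _ => by ring
  have hs : (0 : ℝ) ≤ #s := Nat.cast_nonneg _
  rw [expand, h1, h2, h3, h4]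
  nlinarith [mul_le_mul_of_nonneg_left hM3 (by positivity : 0 ≤ 4 * a * #s),
    mul_le_mul_of_nonneg_left hM4 hs]

end IndependentCoordinates

section RandomPermutation

variable {α : Type*} [Fintype α] [DecidableEq α]

lemma expect_perm_mul_right (F : Perm α → ℝ) (σ : Perm α) :
    𝔼 τ, F (τ * σ) = 𝔼 τ, F τ :=
  Fintype.expect_equiv (Equiv.mulRight σ) _ _ fun _ => rfl

lemma card_mul_expect_perm_apply (h : α → ℝ) (l : α) :
    Fintype.card α * 𝔼 τ : Perm α, h (τ l) = ∑ k, h k := by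
  have hconst : ∀ l', 𝔼 τ : Perm α, h (τ l') = 𝔼 τ : Perm α, h (τ l) := fun l' => by
    rw [← expect_perm_mul_right _ (swap l l')]
    simp [Perm.mul_apply]
  calc Fintype.card α * 𝔼 τ : Perm α, h (τ l)
      = ∑ l', 𝔼 τ : Perm α, h (τ l') := by simp [hconst]
    _ = 𝔼 τ : Perm α, ∑ l', h (τ l') := (expect_sum_comm _ _ _).symm
    _ = ∑ k, h k := by simp [Equiv.sum_comp]

lemma expect_perm_apply_eq_zero {f : α → ℝ} (hf : ∑ k, f k = 0) (l : α) :
    𝔼 τ : Perm α, f (τ l) = 0 := by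
  have : Nonempty α := ⟨l⟩
  have : (Fintype.card α : ℝ) ≠ 0 := Nat.cast_ne_zero.2 Fintype.card_ne_zero
  simpa [this, hf] using card_mul_expect_perm_apply f l

lemma expect_perm_apply_mul_apply_eq_of_ne (f : α → ℝ) {l l' l'' : α} (h' : l' ≠ l)
    (h'' : l'' ≠ l) :
    𝔼 τ : Perm α, f (τ l) * f (τ l'') = 𝔼 τ : Perm α, f (τ l) * f (τ l') := by
  rw [← expect_perm_mul_right _ (swap l' l'')]
  simp [Perm.mul_apply, swap_apply_of_ne_of_ne h'.symm h''.symm]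

lemma card_sub_one_mul_expect_perm_apply_mul_apply {f : α → ℝ} (hf : ∑ k, f k = 0)
    {l l' : α} (hl : l' ≠ l) :
    (Fintype.card α - 1) * 𝔼 τ : Perm α, f (τ l) * f (τ l') = -𝔼 τ : Perm α, f (τ l) ^ 2 := by
  have : Nonempty α := ⟨l⟩
  have hrow : ∑ l'', 𝔼 τ : Perm α, f (τ l) * f (τ l'') = 0 := by
    rw [← expect_sum_comm]
    simp [← mul_sum, Equiv.sum_comp, hf]
  rw [← add_sum_erase _ _ (mem_univ l), sum_congr rfl fun l'' hl'' =>
    expect_perm_apply_mul_apply_eq_of_ne f hl (ne_of_mem_erase hl'')] at hrow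
  rw [sum_const, card_erase_of_mem (mem_univ l), card_univ, nsmul_eq_mul,
    Nat.cast_pred Fintype.card_pos] at hrow
  simp only [← sq] at hrow
  linarith

theorem card_sub_one_mul_expect_sum_perm_sq {f g : α → ℝ} (hf : ∑ k, f k = 0)
    (hg : ∑ k, g k = 0) :
    (Fintype.card α - 1) * 𝔼 τ : Perm α, (∑ l, f (τ l) * g l) ^ 2
      = (∑ k, f k ^ 2) * ∑ l, g l ^ 2 := by
  have hrow : ∀ l, (Fintype.card α - 1) * ∑ l', g l' * 𝔼 τ : Perm α, f (τ l) * f (τ l')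
      = g l * ∑ k, f k ^ 2 := fun l => by
    have hg' : ∑ l' ∈ univ.erase l, g l' = -g l := by
      rw [← add_sum_erase _ _ (mem_univ l)] at hg; linarith
    rw [← add_sum_erase _ _ (mem_univ l), mul_add, mul_sum,
      sum_congr rfl fun l' hl' => by
        rw [mul_left_comm, card_sub_one_mul_expect_perm_apply_mul_apply hf (ne_of_mem_erase hl')],
      ← sum_mul, hg', ← card_mul_expect_perm_apply (f · ^ 2) l]
    simp only [sq]
    ring
  have expand : 𝔼 τ : Perm α, (∑ l, f (τ l) * g l) ^ 2
      = ∑ l, g l * ∑ l', g l' * 𝔼 τ : Perm α, f (τ l) * f (τ l') := by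
    calc 𝔼 τ : Perm α, (∑ l, f (τ l) * g l) ^ 2
        = 𝔼 τ : Perm α, ∑ l, ∑ l', g l * (g l' * (f (τ l) * f (τ l'))) :=
          expect_congr rfl fun τ _ => by
            rw [sq, sum_mul_sum]
            exact sum_congr rfl fun _ _ => sum_congr rfl fun _ _ => by ring
      _ = _ := by simp only [expect_sum_comm, mul_expect, mul_sum]
  rw [expand, mul_sum, mul_comm, sum_mul]
  refine sum_congr rfl fun l _ => ?_
  rw [mul_left_comm, hrow]
  ring

end RandomPermutation

section CenteredRanks

noncomputable def centeredRank (r : ℕ) (k : Fin r) : ℝ := (k : ℝ) + 1 - ((r : ℝ) + 1) / 2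

lemma rho_eq_centeredRank (n r : ℕ) (i : Fin n) (j : Fin r) (ω : Fin n → Perm (Fin r)) :
    rho n r i j ω = centeredRank r (ω i j) := rfl

lemma sum_range_cast_add (r : ℕ) (c : ℝ) :
    ∑ k ∈ range r, ((k : ℝ) + c) = r * (r - 1) / 2 + r * c := by
  induction r with
  | zero => simp
  | succ q ih => rw [sum_range_succ, ih]; push_cast; ring

lemma sum_range_cast_add_sq (r : ℕ) (c : ℝ) :
    ∑ k ∈ range r, ((k : ℝ) + c) ^ 2
      = r * (r - 1) * (2 * r - 1) / 6 + r * (r - 1) * c + r * c ^ 2 := by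
  induction r with
  | zero => simp
  | succ q ih => rw [sum_range_succ, ih]; push_cast; ring

lemma centeredRank_eq_add (r : ℕ) (k : Fin r) :
    centeredRank r k = (k : ℕ) + (1 - ((r : ℝ) + 1) / 2) := add_sub_assoc _ _ _

lemma sum_centeredRank (r : ℕ) : ∑ k, centeredRank r k = 0 := by
  simp only [centeredRank_eq_add]
  rw [Fin.sum_univ_eq_sum_range (fun k => (k : ℝ) + (1 - ((r : ℝ) + 1) / 2)), sum_range_cast_add]
  ring

lemma sum_centeredRank_sq (r : ℕ) : ∑ k, centeredRank r k ^ 2 = r * ((r : ℝ) ^ 2 - 1) / 12 := by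
  simp only [centeredRank_eq_add]
  rw [Fin.sum_univ_eq_sum_range (fun k => ((k : ℝ) + (1 - ((r : ℝ) + 1) / 2)) ^ 2),
    sum_range_cast_add_sq]
  ring

noncomputable def rankCorrelation (r : ℕ) (τ : Perm (Fin r)) : ℝ :=
  ∑ l, centeredRank r (τ l) * centeredRank r l

lemma abs_rankCorrelation_le (r : ℕ) (τ : Perm (Fin r)) :
    |rankCorrelation r τ| ≤ r * ((r : ℝ) ^ 2 - 1) / 12 := by
  rw [← sum_centeredRank_sq]
  refine abs_le_of_sq_le_sq ?_ (sum_nonneg fun _ _ => sq_nonneg _)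
  calc rankCorrelation r τ ^ 2
      ≤ (∑ l, centeredRank r (τ l) ^ 2) * ∑ l, centeredRank r l ^ 2 :=
        sum_mul_sq_le_sq_mul_sq _ _ _
    _ = (∑ k, centeredRank r k ^ 2) ^ 2 := by
        rw [Equiv.sum_comp τ (centeredRank r · ^ 2), sq]

lemma expect_rankCorrelation (r : ℕ) : 𝔼 τ, rankCorrelation r τ = 0 := by
  simp only [rankCorrelation, expect_sum_comm, ← expect_mul,
    expect_perm_apply_eq_zero (sum_centeredRank r), zero_mul, sum_const_zero]

lemma expect_rankCorrelation_sq (r : ℕ) :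
    ((r : ℝ) - 1) * 𝔼 τ, rankCorrelation r τ ^ 2 = (r * ((r : ℝ) ^ 2 - 1) / 12) ^ 2 := by
  have := card_sub_one_mul_expect_sum_perm_sq (sum_centeredRank r) (sum_centeredRank r)
  rwa [Fintype.card_fin, sum_centeredRank_sq, ← sq] at this

end CenteredRanks

def mulRightByCoord {ι G : Type*} [DecidableEq ι] [Group G] (m : ι) : (ι → G) ≃ (ι → G) where
  toFun ω i := if i = m then ω m else ω i * ω m
  invFun ω i := if i = m then ω m else ω i * (ω m)⁻¹
  left_inv ω := funext fun i => by by_cases h : i = m <;> simp [h]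
  right_inv ω := funext fun i => by by_cases h : i = m <;> simp [h]

lemma sum_Sstat_mul_rho_mulRightByCoord (n r : ℕ) (m : Fin n) (ω : Fin n → Perm (Fin r)) :
    ∑ l, Sstat n r l (mulRightByCoord m ω) * rho n r m l (mulRightByCoord m ω)
      = √12 / √((r : ℝ) * ((r : ℝ) + 1) * (n : ℝ))
        * (r * ((r : ℝ) ^ 2 - 1) / 12 + ∑ i ∈ univ.erase m, rankCorrelation r (ω i)) := by
  have hterm : ∀ i, ∑ l, rho n r i l (mulRightByCoord m ω) * rho n r m l (mulRightByCoord m ω)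
      = if i = m then r * ((r : ℝ) ^ 2 - 1) / 12 else rankCorrelation r (ω i) := fun i => by
    simp only [rho_eq_centeredRank, mulRightByCoord, Equiv.coe_fn_mk]
    split_ifs
    · simp only [← sq, Equiv.sum_comp (ω m) (centeredRank r · ^ 2), sum_centeredRank_sq]
    · exact Equiv.sum_comp (ω m) fun k => centeredRank r (ω i k) * centeredRank r k
  simp only [Sstat, mul_assoc, sum_mul, ← mul_sum]
  rw [sum_comm, ← add_sum_erase _ _ (mem_univ m)]
  simp only [hterm]
  congr 2
  exact sum_congr rfl fun i hi => if_neg (ne_of_mem_erase hi)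

instance (r : ℕ) : MeasurableSingletonClass (Perm (Fin r)) :=
  ⟨fun _ => MeasurableSpace.measurableSet_top⟩

lemma integral_friedmanMeasure (n r : ℕ) (f : (Fin n → Perm (Fin r)) → ℝ) :
    ∫ ω, f ω ∂(friedmanMeasure n r) = 𝔼 ω, f ω := by
  rw [friedmanMeasure, PMF.integral_eq_sum, Fintype.expect_eq_sum_div_card, sum_div]
  simp [PMF.uniformOfFintype_apply, div_eq_inv_mul]

lemma fourth_moment_arith {x y M : ℝ} (hx : 2 ≤ x) (hy : 2 ≤ y)
    (hM : (y - 1) * M = (y * (y ^ 2 - 1) / 12) ^ 2) :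
    144 / (y * (y + 1) * x) ^ 2 * ((y * (y ^ 2 - 1) / 12) ^ 4
      + 11 * (x - 1) * (y * (y ^ 2 - 1) / 12) ^ 2 * M + 3 * (x - 1) * (x - 1 - 1) * M ^ 2)
      ≤ (7 / 48 + y ^ 2 / (36 * x ^ 2) + 1 / (5 * x)) * y ^ 6 := by
  have hy1 : y - 1 ≠ 0 := by linarith
  obtain rfl : M = (y * (y ^ 2 - 1) / 12) ^ 2 / (y - 1) := by
    rw [eq_div_iff hy1, ← hM, mul_comm]
  set Q := (y - 1) ^ 2 + 11 * (x - 1) * (y - 1) + 3 * (x - 1) * (x - 2)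
  have hLHS : 144 / (y * (y + 1) * x) ^ 2 * ((y * (y ^ 2 - 1) / 12) ^ 4
      + 11 * (x - 1) * (y * (y ^ 2 - 1) / 12) ^ 2 * ((y * (y ^ 2 - 1) / 12) ^ 2 / (y - 1))
      + 3 * (x - 1) * (x - 1 - 1) * ((y * (y ^ 2 - 1) / 12) ^ 2 / (y - 1)) ^ 2)
      = y ^ 2 * (y ^ 2 - 1) ^ 2 * Q / (144 * x ^ 2) := by
    have : y + 1 ≠ 0 := by linarith
    field_simp
    ring
  have hRHS : (7 / 48 + y ^ 2 / (36 * x ^ 2) + 1 / (5 * x)) * y ^ 6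
      = y ^ 6 * (21 * x ^ 2 + 4 * y ^ 2 + 144 / 5 * x) / (144 * x ^ 2) := by
    field_simp
    ring
  rw [hLHS, hRHS]
  refine div_le_div_of_nonneg_right ?_ (by positivity)
  have hQ : 0 ≤ Q := by
    nlinarith [mul_nonneg (by linarith : 0 ≤ x - 1) (by linarith : 0 ≤ y - 1),
      mul_nonneg (by linarith : 0 ≤ x - 1) (by linarith : 0 ≤ x - 2)]
  calc y ^ 2 * (y ^ 2 - 1) ^ 2 * Q ≤ y ^ 6 * Q := by
        gcongr
        nlinarith
    _ ≤ _ := by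
        gcongr
        nlinarith [sq_nonneg (y - 2 * x)]

/-- **Lemma 3.3, (3.3) (Gaunt–Reinert).** For `n, r ≥ 2` and `T_m = ∑_{l=1}^r S_l ρ_m(l)`,
`E[T_m⁴] ≤ (7/48 + r²/(36n²) + 1/(5n)) r⁶`. -/
theorem Tm_fourth_moment (n r : ℕ) (hn : 2 ≤ n) (hr : 2 ≤ r) (m : Fin n) :
    ∫ ω, (∑ l, Sstat n r l ω * rho n r m l ω) ^ 4 ∂(friedmanMeasure n r)
      ≤ (7 / 48 + (r : ℝ) ^ 2 / (36 * (n : ℝ) ^ 2) + 1 / (5 * (n : ℝ))) * (r : ℝ) ^ 6 := by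
  set K := (r : ℝ) * ((r : ℝ) + 1) * (n : ℝ)
  have hc : (√12 / √K) ^ 4 = 144 / K ^ 2 := by
    rw [div_pow, show (4 : ℕ) = 2 * 2 from rfl, pow_mul, pow_mul, Real.sq_sqrt (by norm_num),
      Real.sq_sqrt (by positivity)]
    norm_num
  have hcard : ((#(univ.erase m) : ℕ) : ℝ) = n - 1 := by
    rw [card_erase_of_mem (mem_univ m), card_univ, Fintype.card_fin, Nat.cast_pred (by omega)]
  calc ∫ ω, (∑ l, Sstat n r l ω * rho n r m l ω) ^ 4 ∂(friedmanMeasure n r)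
      = 𝔼 ω, (∑ l, Sstat n r l (mulRightByCoord m ω) * rho n r m l (mulRightByCoord m ω)) ^ 4 := by
        rw [integral_friedmanMeasure]
        exact (Fintype.expect_equiv (mulRightByCoord m) _ _ fun _ => rfl).symm
    _ = (√12 / √K) ^ 4 * 𝔼 ω : Fin n → Perm (Fin r),
          (r * ((r : ℝ) ^ 2 - 1) / 12 + ∑ i ∈ univ.erase m, rankCorrelation r (ω i)) ^ 4 := by
        simp only [sum_Sstat_mul_rho_mulRightByCoord, mul_pow, mul_expect, K]
    _ ≤ 144 / K ^ 2 * ((r * ((r : ℝ) ^ 2 - 1) / 12) ^ 4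
          + 11 * (n - 1) * (r * ((r : ℝ) ^ 2 - 1) / 12) ^ 2 * 𝔼 τ, rankCorrelation r τ ^ 2
          + 3 * (n - 1) * (n - 1 - 1) * (𝔼 τ, rankCorrelation r τ ^ 2) ^ 2) := by
        rw [hc, ← hcard]
        gcongr
        exact expect_add_sum_pow_four_le _ (expect_rankCorrelation r) (abs_rankCorrelation_le r) _
    _ ≤ _ := fourth_moment_arith (by exact_mod_cast hn) (by exact_mod_cast hr)
        (expect_rankCorrelation_sq r)
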